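/- arXiv:math/0003105 — 2 statements merged into one kernel-verified Lean document; each statement's English description precedes it below -/
import Mathlib

section
/- Let F(z) = ∑_{n≥1} f_n z^n with f_1 = λ, |λ| = 1, λ not a root of unity, and suppose |f_n| ≤ c_1 c_2^n N_n for all n with c_1, c_2 ≥ 1, where (N_n) is logarithmically convex, N_1 ≥ 1, and satisfies N_n N_m ≤ N_{n+m−1}. Let h_n be defined by the linearization recurrence h_1 = 1, h_n = (λ^n − λ)^{-1} ∑_{m=2}^n f_m ∑_{n_1+⋯+n_m=n, n_i≥1} h_{n_1}⋯h_{n_m}. Let K be superadditive with K(0)=0 and −log|λ^n−1| ≤ K(n)−K(n−1), and let (s_n) be the majorant sequence with s_1=1, s_n = ∑_{m=2}^n m ∑_{n_1+⋯+n_m=n} s_{n_1}⋯s_{n_m}. Then |h_n| ≤ c_1^{n−1} c_2^{2n−2} s_n N_n e^{K(n−1)} for all n ≥ 1. -/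
open Finset

/-- Compositions of `n` into `m` positive parts. -/
def comps (m n : ℕ) : Finset (Fin m → ℕ) :=
  (Finset.Nat.antidiagonalTuple m n).filter fun t => ∀ i, 1 ≤ t i

lemma mem_comps {m n : ℕ} {t : Fin m → ℕ} :
    t ∈ comps m n ↔ (∑ i, t i) = n ∧ ∀ i, 1 ≤ t i := by
  simp [comps, Finset.Nat.mem_antidiagonalTuple]

lemma comps_eq_empty {m n : ℕ} (h : n < m) : comps m n = ∅ := by
  rw [Finset.eq_empty_iff_forall_notMem]
  intro t ht
  rw [mem_comps] at ht
  obtain ⟨hsum, hpos⟩ := ht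
  have : (m : ℕ) ≤ ∑ i, t i := by
    calc (m:ℕ) = ∑ _i : Fin m, 1 := by simp
    _ ≤ ∑ i, t i := Finset.sum_le_sum fun i _ => hpos i
  omega

lemma comps_one {n : ℕ} (hn : 1 ≤ n) : comps 1 n = {fun _ => n} := by
  ext t
  rw [mem_comps, Finset.mem_singleton]
  constructor
  · rintro ⟨hsum, _⟩
    funext i
    have : i = 0 := Subsingleton.elim _ _
    rw [Fin.sum_univ_one] at hsum
    rw [this]
    exact hsum
  · rintro rfl
    exact ⟨by simp, fun _ => hn⟩

section XS

variable (s : ℕ → ℝ)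

/-- Sum over compositions of `n` into `m` positive parts of products of `s`. -/
noncomputable def XS (m n : ℕ) : ℝ := ∑ t ∈ comps m n, ∏ i, s (t i)

lemma XS_of_lt {m n : ℕ} (h : n < m) : XS s m n = 0 := by
  rw [XS, comps_eq_empty h, Finset.sum_empty]

lemma XS_one {n : ℕ} (hn : 1 ≤ n) : XS s 1 n = s n := by
  rw [XS, comps_one hn, Finset.sum_singleton, Fin.prod_univ_one]

lemma XS_nonneg (hs : ∀ k, 1 ≤ k → 0 ≤ s k) (m n : ℕ) : 0 ≤ XS s m n := by
  refine Finset.sum_nonneg fun t ht => Finset.prod_nonneg fun i _ => ?_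
  exact hs _ ((mem_comps.mp ht).2 i)

lemma XS_split (r m n : ℕ) (hr : 1 ≤ r) :
    XS s (r + m) n = ∑ a ∈ Finset.Icc 1 n, XS s r a * XS s m (n - a) := by
  calc XS s (r + m) n
      = ∑ x ∈ (Finset.Icc 1 n).sigma (fun a => (comps r a) ×ˢ (comps m (n - a))),
          (∏ i, s (x.2.1 i)) * ∏ i, s (x.2.2 i) := ?_
    _ = ∑ a ∈ Finset.Icc 1 n, ∑ p ∈ (comps r a) ×ˢ (comps m (n - a)),
          (∏ i, s (p.1 i)) * ∏ i, s (p.2 i) := Finset.sum_sigma _ _ _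
    _ = ∑ a ∈ Finset.Icc 1 n, XS s r a * XS s m (n - a) := by
          refine Finset.sum_congr rfl fun a _ => ?_
          rw [XS, XS, Finset.sum_mul_sum, Finset.sum_product]
  rw [XS]
  refine Finset.sum_nbij'
    (i := fun t => ⟨∑ i : Fin r, t (Fin.castAdd m i),
      (fun i => t (Fin.castAdd m i), fun i => t (Fin.natAdd r i))⟩)
    (j := fun p => Fin.append p.2.1 p.2.2) ?_ ?_ ?_ ?_ ?_
  · intro t ht
    rw [mem_comps] at ht
    obtain ⟨hsum, hpos⟩ := ht
    rw [Fin.sum_univ_add] at hsum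
    have h1 : 1 ≤ ∑ i : Fin r, t (Fin.castAdd m i) := by
      have := Finset.single_le_sum (f := fun i : Fin r => t (Fin.castAdd m i))
        (fun i _ => Nat.zero_le _) (Finset.mem_univ ⟨0, hr⟩)
      exact le_trans (hpos _) this
    have h2 : ∑ i : Fin r, t (Fin.castAdd m i) ≤ n := by omega
    have h3 : ∑ i : Fin m, t (Fin.natAdd r i) = n - ∑ i : Fin r, t (Fin.castAdd m i) := by
      omega
    refine Finset.mem_sigma.mpr ⟨Finset.mem_Icc.mpr ⟨h1, h2⟩, ?_⟩
    exact Finset.mem_product.mpr ⟨mem_comps.mpr ⟨rfl, fun i => hpos _⟩,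
      mem_comps.mpr ⟨h3, fun i => hpos _⟩⟩
  · rintro ⟨a, u, v⟩ hp
    rw [Finset.mem_sigma, Finset.mem_product] at hp
    obtain ⟨hmem, hu, hv⟩ := hp
    rw [Finset.mem_Icc] at hmem
    rw [mem_comps] at hu hv
    dsimp only at *
    refine mem_comps.mpr ⟨?_, ?_⟩
    · rw [Fin.sum_univ_add]
      have e1 : ∀ j : Fin r, Fin.append u v (Fin.castAdd m j) = u j :=
        fun j => Fin.append_left u v j
      have e2 : ∀ j : Fin m, Fin.append u v (Fin.natAdd r j) = v j :=
        fun j => Fin.append_right u v j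
      rw [Finset.sum_congr rfl fun j _ => e1 j, Finset.sum_congr rfl fun j _ => e2 j,
        hu.1, hv.1]
      omega
    · intro i
      refine Fin.addCases (fun j => ?_) (fun j => ?_) i
      · rw [Fin.append_left]; exact hu.2 j
      · rw [Fin.append_right]; exact hv.2 j
  · intro t _
    dsimp only
    funext i
    refine Fin.addCases (fun j => ?_) (fun j => ?_) i
    · rw [Fin.append_left]
    · rw [Fin.append_right]
  · rintro ⟨a, u, v⟩ hp
    rw [Finset.mem_sigma, Finset.mem_product] at hp
    obtain ⟨hmem, hu, hv⟩ := hp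
    rw [mem_comps] at hu
    dsimp only
    have e1 : (fun i => Fin.append u v (Fin.castAdd m i)) = u := by
      funext j; exact Fin.append_left u v j
    have e2 : (fun i => Fin.append u v (Fin.natAdd r i)) = v := by
      funext j; exact Fin.append_right u v j
    rw [Finset.sum_congr rfl fun j _ => Fin.append_left u v j]
    rw [e1, e2, hu.1]
  · intro t _
    dsimp only
    rw [Fin.prod_univ_add]


end XS

section Comb

variable {s : ℕ → ℝ} (hs0 : ∀ k, 1 ≤ k → 0 ≤ s k) (hs1 : s 1 = 1)
  (hsrec : ∀ n : ℕ, 2 ≤ n → s n = ∑ m ∈ Finset.Icc 2 n, (m : ℝ) * XS s m n)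

include hs0 hs1 hsrec

lemma sbound (R a : ℕ) (ha : 1 ≤ a) :
    ∑ r ∈ Finset.Icc 2 R, (r : ℝ) * XS s r a ≤ s a := by
  rcases eq_or_lt_of_le ha with h1 | h2
  · have hz : ∀ r ∈ Finset.Icc 2 R, (r : ℝ) * XS s r a = 0 := by
      intro r hr
      rw [Finset.mem_Icc] at hr
      rw [XS_of_lt s (by omega), mul_zero]
    rw [Finset.sum_eq_zero hz, ← h1, hs1]
    norm_num
  · calc ∑ r ∈ Finset.Icc 2 R, (r : ℝ) * XS s r a
        ≤ ∑ r ∈ Finset.Icc 2 (max R a), (r : ℝ) * XS s r a := by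
          refine Finset.sum_le_sum_of_subset_of_nonneg
            (Finset.Icc_subset_Icc_right (le_max_left _ _)) fun i _ _ => ?_
          exact mul_nonneg (by positivity) (XS_nonneg s hs0 _ _)
      _ = ∑ r ∈ Finset.Icc 2 a, (r : ℝ) * XS s r a := by
          refine (Finset.sum_subset (Finset.Icc_subset_Icc_right (le_max_right _ _))
            fun x hx hnx => ?_).symm
          rw [Finset.mem_Icc] at hx hnx
          rw [XS_of_lt s (by omega), mul_zero]
      _ = s a := (hsrec a h2).symm

lemma D1 (m' R n : ℕ) :
    ∑ r ∈ Finset.Icc 2 R, (r : ℝ) * XS s (r + m') n ≤ XS s (1 + m') n := by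
  rw [XS_split s 1 m' n le_rfl]
  calc ∑ r ∈ Finset.Icc 2 R, (r : ℝ) * XS s (r + m') n
      = ∑ r ∈ Finset.Icc 2 R, (r : ℝ) *
          ∑ a ∈ Finset.Icc 1 n, XS s r a * XS s m' (n - a) := by
        refine Finset.sum_congr rfl fun r hr => ?_
        rw [Finset.mem_Icc] at hr
        rw [XS_split s r m' n (by omega)]
    _ = ∑ a ∈ Finset.Icc 1 n,
          (∑ r ∈ Finset.Icc 2 R, (r : ℝ) * XS s r a) * XS s m' (n - a) := by
        simp_rw [Finset.mul_sum, Finset.sum_mul]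
        rw [Finset.sum_comm]
        refine Finset.sum_congr rfl fun a _ => Finset.sum_congr rfl fun r _ => by ring
    _ ≤ ∑ a ∈ Finset.Icc 1 n, s a * XS s m' (n - a) := by
        refine Finset.sum_le_sum fun a ha => ?_
        rw [Finset.mem_Icc] at ha
        exact mul_le_mul_of_nonneg_right (sbound hs0 hs1 hsrec R a ha.1)
          (XS_nonneg s hs0 _ _)
    _ = ∑ a ∈ Finset.Icc 1 n, XS s 1 a * XS s m' (n - a) := by
        refine Finset.sum_congr rfl fun a ha => ?_
        rw [Finset.mem_Icc] at ha
        rw [XS_one s ha.1]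

lemma D2 (m' n : ℕ) :
    2 * XS s (m' + 2) n + 3 * XS s (m' + 3) n ≤ XS s (m' + 1) n := by
  have h := D1 hs0 hs1 hsrec m' 3 n
  have hicc : Finset.Icc 2 3 = ({2, 3} : Finset ℕ) := rfl
  rw [hicc, Finset.sum_insert (by decide), Finset.sum_singleton] at h
  rw [show 2 + m' = m' + 2 by omega, show 3 + m' = m' + 3 by omega,
    show 1 + m' = m' + 1 by omega] at h
  push_cast at h
  linarith

lemma D3 (d : ℕ) : ∀ m' n : ℕ, n ≤ m' + 2 + d →
    3 * ∑ j ∈ Finset.Icc (m' + 2) n, (2:ℝ) ^ (j - 2) * XS s j n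
      ≤ 2 ^ m' * (7 * XS s (m' + 2) n + 6 * XS s (m' + 3) n) := by
  induction d with
  | zero =>
    intro m' n hn
    rcases lt_or_ge n (m' + 2) with h | h
    · rw [Finset.Icc_eq_empty (by omega), Finset.sum_empty]
      have h1 := XS_nonneg s hs0 (m' + 2) n
      have h2 := XS_nonneg s hs0 (m' + 3) n
      have hp : (0:ℝ) < 2 ^ m' := by positivity
      nlinarith
    · have hn' : n = m' + 2 := by omega
      subst hn'
      rw [Finset.Icc_self, Finset.sum_singleton]
      have h2 := XS_nonneg s hs0 (m' + 3) (m' + 2)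
      have h1 := XS_nonneg s hs0 (m' + 2) (m' + 2)
      have hp : (0:ℝ) < 2 ^ m' := by positivity
      rw [Nat.add_sub_cancel]
      nlinarith
  | succ d ih =>
    intro m' n hn
    rcases lt_or_ge n (m' + 3) with h | h
    · -- n ≤ m' + 2, reuse the d = 0 style argument via ih with d
      exact ih m' n (by omega)
    · have hicc : Finset.Icc (m' + 2) n = insert (m' + 2) (Finset.Icc (m' + 3) n) := by
        ext x
        simp only [Finset.mem_Icc, Finset.mem_insert]
        omega
      rw [hicc, Finset.sum_insert (by simp)]
      have hIH := ih (m' + 1) n (by omega)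
      rw [show m' + 1 + 2 = m' + 3 by omega, show m' + 1 + 3 = m' + 4 by omega] at hIH
      have hD2 := D2 hs0 hs1 hsrec (m' + 1) n
      rw [show m' + 1 + 2 = m' + 3 by omega, show m' + 1 + 3 = m' + 4 by omega,
        show m' + 1 + 1 = m' + 2 by omega] at hD2
      rw [Nat.add_sub_cancel]
      have hp : (0:ℝ) < 2 ^ m' := by positivity
      have hmul := mul_le_mul_of_nonneg_left hD2 (le_of_lt (by positivity : (0:ℝ) < 4 * 2 ^ m'))
      rw [pow_succ] at hIH
      nlinarith
  -- end

lemma comb_final (n : ℕ) (hn : 2 ≤ n) :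
    ∑ m ∈ Finset.Icc 2 n, (2:ℝ) ^ (m - 2) * XS s m n ≤ s n := by
  rcases lt_or_ge n 5 with hsmall | hlarge
  · rw [hsrec n hn]
    refine Finset.sum_le_sum fun m hm => ?_
    rw [Finset.mem_Icc] at hm
    have hXm := XS_nonneg s hs0 m n
    have hcoef : (2:ℝ) ^ (m - 2) ≤ (m : ℝ) := by
      have hm4 : m ≤ 4 := by omega
      have hm2 := hm.1
      interval_cases m <;> norm_num
    exact mul_le_mul_of_nonneg_right hcoef hXm
  · have h2 : Finset.Icc 2 n = insert 2 (Finset.Icc 3 n) := by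
      ext x; simp only [Finset.mem_Icc, Finset.mem_insert]; omega
    have h3 : Finset.Icc 3 n = insert 3 (Finset.Icc 4 n) := by
      ext x; simp only [Finset.mem_Icc, Finset.mem_insert]; omega
    rw [h2, Finset.sum_insert (by simp), h3, Finset.sum_insert (by simp)]
    have hD3 := D3 hs0 hs1 hsrec n 2 n (by omega)
    norm_num at hD3
    have hb : 2 * XS s 2 n + 3 * XS s 3 n + 4 * XS s 4 n + 5 * XS s 5 n ≤ s n := by
      have := sbound hs0 hs1 hsrec 5 n (by omega)
      have hicc : Finset.Icc 2 5 = ({2, 3, 4, 5} : Finset ℕ) := rfl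
      rw [hicc] at this
      rw [show ({2, 3, 4, 5} : Finset ℕ) = insert 2 (insert 3 (insert 4 ({5} : Finset ℕ))) from rfl,
        Finset.sum_insert (by decide), Finset.sum_insert (by decide),
        Finset.sum_insert (by decide), Finset.sum_singleton] at this
      push_cast at this
      linarith
    have h34 := D2 hs0 hs1 hsrec 1 n
    norm_num at h34
    have h45 := D2 hs0 hs1 hsrec 2 n
    norm_num at h45
    have hX4 := XS_nonneg s hs0 4 n
    have hX5 := XS_nonneg s hs0 5 n
    norm_num
    linarith

end Comb

section KN

lemma Ksum (K : ℕ → ℝ) (hK0 : K 0 = 0) (hKsuper : ∀ n₁ n₂ : ℕ, K n₁ + K n₂ ≤ K (n₁ + n₂))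
    {ι : Type*} (T : Finset ι) (g : ι → ℕ) :
    ∑ i ∈ T, K (g i) ≤ K (∑ i ∈ T, g i) := by
  induction T using Finset.cons_induction with
  | empty => simp [hK0]
  | cons a T ha ih =>
    rw [Finset.sum_cons, Finset.sum_cons]
    calc K (g a) + ∑ i ∈ T, K (g i) ≤ K (g a) + K (∑ i ∈ T, g i) := by linarith
      _ ≤ K (g a + ∑ i ∈ T, g i) := hKsuper _ _

lemma Nprod (N : ℕ → ℝ) (hNpos : ∀ n : ℕ, 1 ≤ n → 0 < N n)
    (hNcomp : ∀ n : ℕ, 1 ≤ n → ∀ m : ℕ, 1 ≤ m → N n * N m ≤ N (n + m - 1))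
    {ι : Type*} (T : Finset ι) (hT : T.Nonempty) (g : ι → ℕ) (hg : ∀ i ∈ T, 1 ≤ g i) :
    ∏ i ∈ T, N (g i) ≤ N ((∑ i ∈ T, (g i - 1)) + 1) := by
  induction hT using Finset.Nonempty.cons_induction with
  | singleton a =>
    rw [Finset.prod_singleton, Finset.sum_singleton,
      Nat.sub_add_cancel (hg a (Finset.mem_singleton_self a))]
  | cons a T ha hT ih =>
    rw [Finset.prod_cons, Finset.sum_cons]
    have hga : 1 ≤ g a := hg a (Finset.mem_cons_self a T)
    have hg' : ∀ i ∈ T, 1 ≤ g i := fun i hi => hg i (Finset.mem_cons.mpr (Or.inr hi))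
    calc N (g a) * ∏ i ∈ T, N (g i)
        ≤ N (g a) * N ((∑ i ∈ T, (g i - 1)) + 1) :=
          mul_le_mul_of_nonneg_left (ih hg') (le_of_lt (hNpos _ hga))
      _ ≤ N (g a + ((∑ i ∈ T, (g i - 1)) + 1) - 1) :=
          hNcomp _ hga _ (by omega)
      _ = N (g a - 1 + ∑ i ∈ T, (g i - 1) + 1) := by
          congr 1
          omega

end KN

lemma part_lt {m n : ℕ} (hm : 2 ≤ m) {t : Fin m → ℕ} (ht : t ∈ comps m n) (i : Fin m) :
    t i < n := by
  obtain ⟨hsum, hpos⟩ := mem_comps.mp ht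
  have hne : ∃ j : Fin m, j ≠ i := by
    rcases Nat.lt_or_ge i.val 1 with h | h
    · exact ⟨⟨1, by omega⟩, by simp [Fin.ext_iff]; omega⟩
    · exact ⟨⟨0, by omega⟩, by simp [Fin.ext_iff]; omega⟩
  obtain ⟨j, hj⟩ := hne
  have hsub : ({i, j} : Finset (Fin m)) ⊆ Finset.univ := Finset.subset_univ _
  have h2 : t i + t j ≤ ∑ x, t x := by
    rw [← Finset.sum_pair (Ne.symm hj)]
    exact Finset.sum_le_sum_of_subset hsub
  have := hpos j
  omega

lemma Kstep (lam : ℂ) (hlam_abs : ‖lam‖ = 1)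
    (hlam_root : ∀ n : ℕ, 1 ≤ n → lam ^ n ≠ 1)
    (K : ℕ → ℝ) (hKlog : ∀ n : ℕ, 1 ≤ n → -Real.log ‖lam ^ n - 1‖ ≤ K n - K (n - 1)) :
    ∀ a b : ℕ, a ≤ b → K a ≤ K b + ((b - a : ℕ) : ℝ) * Real.log 2 := by
  have hstep : ∀ b : ℕ, K b ≤ K (b + 1) + Real.log 2 := by
    intro b
    have hKl := hKlog (b + 1) (by omega)
    rw [Nat.add_sub_cancel] at hKl
    have hb2 : ‖lam ^ (b + 1) - 1‖ ≤ 2 := by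
      calc ‖lam ^ (b + 1) - 1‖ ≤ ‖lam ^ (b + 1)‖ + ‖(1 : ℂ)‖ := norm_sub_le _ _
        _ = 2 := by rw [norm_pow, hlam_abs, one_pow, norm_one]; norm_num
    have hpos : 0 < ‖lam ^ (b + 1) - 1‖ :=
      norm_pos_iff.mpr (sub_ne_zero.mpr (hlam_root (b + 1) (by omega)))
    have hlog : Real.log ‖lam ^ (b + 1) - 1‖ ≤ Real.log 2 :=
      (Real.log_le_log_iff hpos two_pos).mpr hb2
    linarith
  intro a b hab
  induction b, hab using Nat.le_induction with
  | base => simp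
  | succ b hab ih =>
    have h1 := hstep b
    have h2 : ((b + 1 - a : ℕ) : ℝ) = ((b - a : ℕ) : ℝ) + 1 := by
      rw [show b + 1 - a = (b - a) + 1 by omega]
      push_cast
      ring
    rw [h2]
    linarith


/-- the inductive estimate `|h_n| ≤ c₁^{n-1} c₂^{2n-2} s_n N_n e^{K(n-1)}`
for the linearization of an ultradifferentiable germ. -/
theorem stmt2 (lam : ℂ) (hlam_abs : ‖lam‖ = 1)
    (hlam_root : ∀ n : ℕ, 1 ≤ n → lam ^ n ≠ 1)
    (f : ℕ → ℂ) (hf1 : f 1 = lam)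
    (c₁ c₂ : ℝ) (hc₁ : 1 ≤ c₁) (hc₂ : 1 ≤ c₂)
    (N : ℕ → ℝ) (hNpos : ∀ n : ℕ, 1 ≤ n → 0 < N n) (hN1 : 1 ≤ N 1)
    (hNconv : ∀ n : ℕ, 1 ≤ n → N (n + 1) ^ 2 ≤ N n * N (n + 2))
    (hNcomp : ∀ n : ℕ, 1 ≤ n → ∀ m : ℕ, 1 ≤ m → N n * N m ≤ N (n + m - 1))
    (hfN : ∀ n : ℕ, 1 ≤ n → ‖f n‖ ≤ c₁ * c₂ ^ n * N n)
    (h : ℕ → ℂ) (hh1 : h 1 = 1)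
    (hhrec : ∀ n : ℕ, 2 ≤ n → h n = (lam ^ n - lam)⁻¹ *
      ∑ m ∈ Finset.Icc 2 n, f m * ∑ t ∈ comps m n, ∏ i, h (t i))
    (K : ℕ → ℝ) (hK0 : K 0 = 0)
    (hKsuper : ∀ n₁ n₂ : ℕ, K n₁ + K n₂ ≤ K (n₁ + n₂))
    (hKlog : ∀ n : ℕ, 1 ≤ n → -Real.log ‖lam ^ n - 1‖ ≤ K n - K (n - 1))
    (s : ℕ → ℝ) (hs1 : s 1 = 1)
    (hsrec : ∀ n : ℕ, 2 ≤ n →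
      s n = ∑ m ∈ Finset.Icc 2 n, (m : ℝ) * ∑ t ∈ comps m n, ∏ i, s (t i)) :
    ∀ n : ℕ, 1 ≤ n →
      ‖h n‖ ≤ c₁ ^ (n - 1) * c₂ ^ (2 * n - 2) * s n * N n * Real.exp (K (n - 1)) := by
  -- recurrence for s in terms of XS
  have hsrecX : ∀ n : ℕ, 2 ≤ n → s n = ∑ m ∈ Finset.Icc 2 n, (m : ℝ) * XS s m n :=
    fun n hn => hsrec n hn
  -- nonnegativity of s
  have hs0 : ∀ k : ℕ, 1 ≤ k → 0 ≤ s k := by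
    intro k
    induction k using Nat.strong_induction_on with
    | _ k ih =>
      intro hk
      rcases lt_or_ge k 2 with hlt | hge
      · have : k = 1 := by omega
        rw [this, hs1]
        norm_num
      · rw [hsrecX k hge]
        refine Finset.sum_nonneg fun m hm => ?_
        rw [Finset.mem_Icc] at hm
        refine mul_nonneg (by positivity) (Finset.sum_nonneg fun t ht => ?_)
        refine Finset.prod_nonneg fun i _ => ?_
        exact ih (t i) (part_lt hm.1 ht i) ((mem_comps.mp ht).2 i)
  intro n
  induction n using Nat.strong_induction_on with
  | _ n ih =>
    intro hn1
    rcases lt_or_ge n 2 with hlt | hn2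
    · have hne : n = 1 := by omega
      subst hne
      rw [hh1, norm_one]
      simp only [Nat.sub_self, pow_zero, mul_one, one_mul]
      rw [hs1, hK0, Real.exp_zero]
      simpa using hN1
    · have hc1nn : (0:ℝ) ≤ c₁ := le_trans zero_le_one hc₁
      have hc2nn : (0:ℝ) ≤ c₂ := le_trans zero_le_one hc₂
      -- the constant
      set C : ℝ := c₁ ^ (n - 1) * c₂ ^ (2 * n - 2) * N n * Real.exp (K (n - 2)) with hC
      have hNn : 0 < N n := hNpos n (by omega)
      have hC0 : 0 ≤ C :=
        mul_nonneg (mul_nonneg (mul_nonneg (pow_nonneg hc1nn _) (pow_nonneg hc2nn _))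
          (le_of_lt hNn)) (Real.exp_nonneg _)
      -- resolvent estimate
      have hresolv : ‖(lam ^ n - lam)⁻¹‖ ≤ Real.exp (K (n - 1) - K (n - 2)) := by
        have hfac : lam ^ n - lam = lam * (lam ^ (n - 1) - 1) := by
          rw [mul_sub, mul_one, ← pow_succ', show n - 1 + 1 = n by omega]
        have hnz : lam ^ (n - 1) - 1 ≠ 0 :=
          sub_ne_zero.mpr (hlam_root (n - 1) (by omega))
        have hpos : 0 < ‖lam ^ (n - 1) - 1‖ := norm_pos_iff.mpr hnz
        have hKl := hKlog (n - 1) (by omega)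
        rw [show n - 1 - 1 = n - 2 by omega] at hKl
        calc ‖(lam ^ n - lam)⁻¹‖ = ‖lam ^ n - lam‖⁻¹ := norm_inv _
          _ = ‖lam ^ (n - 1) - 1‖⁻¹ := by rw [hfac, norm_mul, hlam_abs, one_mul]
          _ ≤ Real.exp (K (n - 1) - K (n - 2)) := by
              rw [← Real.exp_log hpos, ← Real.exp_neg]
              exact Real.exp_le_exp.mpr hKl
      -- the sum estimate
      have hsum1 : ‖∑ m ∈ Finset.Icc 2 n, f m * ∑ t ∈ comps m n, ∏ i, h (t i)‖ ≤
          (∑ m ∈ Finset.Icc 2 n, (2:ℝ) ^ (m - 2) * XS s m n) * C := by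
        rw [Finset.sum_mul]
        refine le_trans (norm_sum_le _ _) (Finset.sum_le_sum fun m hm => ?_)
        rw [Finset.mem_Icc] at hm
        have hm2 : 2 ≤ m := hm.1
        have hmn : m ≤ n := hm.2
        -- key per-composition estimate
        have key : ∀ t ∈ comps m n, ‖f m‖ * ∏ i, ‖h (t i)‖ ≤
            (2:ℝ) ^ (m - 2) * (∏ i, s (t i)) * C := by
          intro t ht
          obtain ⟨hsumt, hpost⟩ := mem_comps.mp ht
          set E : ℕ := ∑ i, (t i - 1) with hEdef
          have hEm : E + m = n := by
            have h1 : ∑ i, ((t i - 1) + 1) = ∑ i, t i :=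
              Finset.sum_congr rfl fun i _ => by have := hpost i; omega
            rw [Finset.sum_add_distrib] at h1
            simp only [Finset.sum_const, Finset.card_univ, Fintype.card_fin,
              smul_eq_mul, mul_one] at h1
            omega
          -- induction bound on each factor
          have step1 : ∏ i, ‖h (t i)‖ ≤
              ∏ i, (c₁ ^ (t i - 1) * c₂ ^ (2 * t i - 2) * s (t i) * N (t i) *
                Real.exp (K (t i - 1))) := by
            refine Finset.prod_le_prod (fun i _ => norm_nonneg _) (fun i _ => ?_)
            exact ih (t i) (part_lt hm2 ht i) (hpost i)
          have step2 : ∏ i, (c₁ ^ (t i - 1) * c₂ ^ (2 * t i - 2) * s (t i) * N (t i) *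
                Real.exp (K (t i - 1)))
              = (c₁ ^ E) * (c₂ ^ (2 * E)) * (∏ i, s (t i)) * (∏ i, N (t i)) *
                Real.exp (∑ i, K (t i - 1)) := by
            rw [Finset.prod_mul_distrib, Finset.prod_mul_distrib, Finset.prod_mul_distrib,
              Finset.prod_mul_distrib]
            rw [Finset.prod_pow_eq_pow_sum]
            rw [Finset.prod_congr rfl (fun i (_ : i ∈ Finset.univ) =>
              (by rw [show 2 * t i - 2 = 2 * (t i - 1) by have := hpost i; omega] :
                c₂ ^ (2 * t i - 2) = c₂ ^ (2 * (t i - 1))))]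
            rw [Finset.prod_pow_eq_pow_sum, ← Finset.mul_sum, Real.exp_sum]
          -- exponential bound
          have hexp : Real.exp (∑ i, K (t i - 1)) ≤
              (2:ℝ) ^ (m - 2) * Real.exp (K (n - 2)) := by
            have hKE : ∑ i, K (t i - 1) ≤ K E :=
              Ksum K hK0 hKsuper Finset.univ (fun i => t i - 1)
            have hK2 : K E ≤ K (n - 2) + ((m - 2 : ℕ) : ℝ) * Real.log 2 := by
              have hstep := Kstep lam hlam_abs hlam_root K hKlog E (n - 2) (by omega)
              rw [show n - 2 - E = m - 2 by omega] at hstep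
              exact hstep
            calc Real.exp (∑ i, K (t i - 1)) ≤ Real.exp (K (n - 2) +
                  ((m - 2 : ℕ) : ℝ) * Real.log 2) := Real.exp_le_exp.mpr (le_trans hKE hK2)
              _ = Real.exp (K (n - 2)) * (2:ℝ) ^ (m - 2) := by
                  rw [Real.exp_add, Real.exp_nat_mul, Real.exp_log two_pos]
              _ = (2:ℝ) ^ (m - 2) * Real.exp (K (n - 2)) := mul_comm _ _
          -- N bound
          have hNb : N m * ∏ i, N (t i) ≤ N n := by
            have h1 : ∏ i, N (t i) ≤ N (E + 1) := by
              have := Nprod N hNpos hNcomp Finset.univ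
                ⟨⟨0, by omega⟩, Finset.mem_univ _⟩ t (fun i _ => hpost i)
              exact this
            have h2 : N m * N (E + 1) ≤ N (m + (E + 1) - 1) :=
              hNcomp m (by omega) (E + 1) (by omega)
            rw [show m + (E + 1) - 1 = n by omega] at h2
            calc N m * ∏ i, N (t i) ≤ N m * N (E + 1) :=
                mul_le_mul_of_nonneg_left h1 (le_of_lt (hNpos m (by omega)))
              _ ≤ N n := h2
          -- power bounds
          have hc1p : c₁ * c₁ ^ E ≤ c₁ ^ (n - 1) := by
            rw [mul_comm, ← pow_succ]
            exact pow_le_pow_right₀ hc₁ (by omega)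
          have hc2p : c₂ ^ m * c₂ ^ (2 * E) ≤ c₂ ^ (2 * n - 2) := by
            rw [← pow_add]
            exact pow_le_pow_right₀ hc₂ (by omega)
          -- nonnegativity facts
          have hA : 0 ≤ ∏ i, s (t i) :=
            Finset.prod_nonneg fun i _ => hs0 (t i) (hpost i)
          have hB : 0 ≤ ∏ i, N (t i) :=
            Finset.prod_nonneg fun i _ => le_of_lt (hNpos (t i) (hpost i))
          have hc1E : (0:ℝ) ≤ c₁ ^ E := pow_nonneg hc1nn _
          have hc2E : (0:ℝ) ≤ c₂ ^ (2 * E) := pow_nonneg hc2nn _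
          calc ‖f m‖ * ∏ i, ‖h (t i)‖
              ≤ (c₁ * c₂ ^ m * N m) * ((c₁ ^ E) * (c₂ ^ (2 * E)) * (∏ i, s (t i)) *
                  (∏ i, N (t i)) * Real.exp (∑ i, K (t i - 1))) := by
                rw [← step2]
                refine mul_le_mul (hfN m (by omega)) step1
                  (Finset.prod_nonneg fun i _ => norm_nonneg _) ?_
                exact mul_nonneg (mul_nonneg hc1nn (pow_nonneg hc2nn _))
                  (le_of_lt (hNpos m (by omega)))
            _ = ((c₁ * c₁ ^ E) * (c₂ ^ m * c₂ ^ (2 * E)) * (N m * ∏ i, N (t i)) *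
                  Real.exp (∑ i, K (t i - 1))) * (∏ i, s (t i)) := by ring
            _ ≤ ((c₁ ^ (n - 1)) * (c₂ ^ (2 * n - 2)) * N n *
                  ((2:ℝ) ^ (m - 2) * Real.exp (K (n - 2)))) * (∏ i, s (t i)) := by
                refine mul_le_mul_of_nonneg_right ?_ hA
                refine mul_le_mul ?_ hexp (Real.exp_nonneg _)
                  (mul_nonneg (mul_nonneg (pow_nonneg hc1nn _) (pow_nonneg hc2nn _))
                    (le_of_lt hNn))
                refine mul_le_mul ?_ hNb
                  (mul_nonneg (le_of_lt (hNpos m (by omega))) hB)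
                  (mul_nonneg (pow_nonneg hc1nn _) (pow_nonneg hc2nn _))
                exact mul_le_mul hc1p hc2p
                  (mul_nonneg (pow_nonneg hc2nn _) (pow_nonneg hc2nn _))
                  (pow_nonneg hc1nn _)
            _ = (2:ℝ) ^ (m - 2) * (∏ i, s (t i)) * C := by rw [hC]; ring
        -- sum up over compositions
        calc ‖f m * ∑ t ∈ comps m n, ∏ i, h (t i)‖
            = ‖f m‖ * ‖∑ t ∈ comps m n, ∏ i, h (t i)‖ := norm_mul _ _
          _ ≤ ‖f m‖ * ∑ t ∈ comps m n, ∏ i, ‖h (t i)‖ := by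
              refine mul_le_mul_of_nonneg_left ?_ (norm_nonneg _)
              refine le_trans (norm_sum_le _ _) (Finset.sum_le_sum fun t _ => ?_)
              exact le_of_eq (norm_prod _ _)
          _ = ∑ t ∈ comps m n, ‖f m‖ * ∏ i, ‖h (t i)‖ := Finset.mul_sum _ _ _
          _ ≤ ∑ t ∈ comps m n, (2:ℝ) ^ (m - 2) * (∏ i, s (t i)) * C :=
              Finset.sum_le_sum key
          _ = (2:ℝ) ^ (m - 2) * XS s m n * C := by
              rw [XS, Finset.mul_sum, Finset.sum_mul]
      -- combinatorial estimate
      have hXs : ∑ m ∈ Finset.Icc 2 n, (2:ℝ) ^ (m - 2) * XS s m n ≤ s n :=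
        comb_final hs0 hs1 hsrecX n hn2
      have hsn : 0 ≤ s n := hs0 n (by omega)
      -- put everything together
      rw [hhrec n hn2, norm_mul]
      calc ‖(lam ^ n - lam)⁻¹‖ * ‖∑ m ∈ Finset.Icc 2 n, f m * ∑ t ∈ comps m n, ∏ i, h (t i)‖
          ≤ Real.exp (K (n - 1) - K (n - 2)) *
            ((∑ m ∈ Finset.Icc 2 n, (2:ℝ) ^ (m - 2) * XS s m n) * C) :=
            mul_le_mul hresolv hsum1 (norm_nonneg _) (Real.exp_nonneg _)
        _ ≤ Real.exp (K (n - 1) - K (n - 2)) * (s n * C) := by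
            refine mul_le_mul_of_nonneg_left (mul_le_mul_of_nonneg_right hXs hC0)
              (Real.exp_nonneg _)
        _ = c₁ ^ (n - 1) * c₂ ^ (2 * n - 2) * s n * N n *
            (Real.exp (K (n - 1) - K (n - 2)) * Real.exp (K (n - 2))) := by rw [hC]; ring
        _ = c₁ ^ (n - 1) * c₂ ^ (2 * n - 2) * s n * N n * Real.exp (K (n - 1)) := by
            rw [← Real.exp_add, sub_add_cancel]
end

section
/- Let ω be irrational with convergent denominators (q_j), and let U = {q_j : q_{j+1} ≥ (q_j+1)²}. Suppose limsup_{n→∞} (∑_{j=0}^{k(n)} (log q_{j+1})/q_j − (log M_n)/n) = +∞ where inf_n (1/n) log M_n = c > −∞ and k(n) is defined by q_{k(n)} ≤ n < q_{k(n)+1}. Then limsup_{n→∞} (∑_{j ≤ k(n), q_j ∈ U} (log q_{j+1})/q_j − (log M_n)/n) = +∞; in particular U is nonempty (indeed infinite). -/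
open Finset Filter


/-- The iterated fractional parts of the Gauss continued fraction algorithm:
`gaussIter ω n = ω_n`. -/
noncomputable def gaussIter (ω : ℝ) : ℕ → ℝ
  | 0 => Int.fract ω
  | n + 1 => Int.fract (gaussIter ω n)⁻¹

/-- The partial quotients of the Gauss continued fraction algorithm:
`cfA ω 0 = a₀ = ⌊ω⌋`, `cfA ω (n+1) = a_{n+1} = ⌊1/ω_n⌋`. -/
noncomputable def cfA (ω : ℝ) : ℕ → ℤ
  | 0 => ⌊ω⌋
  | n + 1 => ⌊(gaussIter ω n)⁻¹⌋

/-- Denominators of the convergents: `q₋₂ = 1`, `q₋₁ = 0`, `q_n = a_n q_{n-1} + q_{n-2}`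
(so `q₀ = 1`, `q₁ = a₁`). They are positive integers. -/
noncomputable def qden (ω : ℝ) : ℕ → ℕ
  | 0 => 1
  | 1 => (cfA ω 1).toNat
  | n + 2 => (cfA ω (n + 2)).toNat * qden ω (n + 1) + qden ω n

/-- Numerators of the convergents: `p₋₂ = 0`, `p₋₁ = 1`, `p_n = a_n p_{n-1} + p_{n-2}`
(so `p₀ = a₀`, `p₁ = a₁ a₀ + 1`). -/
noncomputable def pnum (ω : ℝ) : ℕ → ℤ
  | 0 => cfA ω 0
  | 1 => cfA ω 1 * cfA ω 0 + 1
  | n + 2 => cfA ω (n + 2) * pnum ω (n + 1) + pnum ω n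

/-- The denominators viewed as real numbers. -/
noncomputable def qr (ω : ℝ) (n : ℕ) : ℝ := (qden ω n : ℝ)

/-! Outside `U`, the bound `q_{j+1} < (q_j + 1)²` gives `log q_{j+1} / q_j ≤ 2 log (q_j + 1) / q_j`,
and these bounds form a convergent series because `q_{j+2} ≥ 2 q_j`. Dropping the indices outside
`U` therefore lowers the sums by a bounded amount, so the limsup stays `+∞`. If `U` were finite,
the restricted sums would be bounded, and so would the whole expression, since `(log M_n)/n ≥ c`. -/

open Real

lemma irrational_gaussIter {ω : ℝ} (hω : Irrational ω) : ∀ n, Irrational (gaussIter ω n)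
  | 0 => hω.sub_intCast ⌊ω⌋
  | n + 1 => (irrational_gaussIter hω n).inv.sub_intCast _

lemma gaussIter_mem_Ioo {ω : ℝ} (hω : Irrational ω) (n : ℕ) : gaussIter ω n ∈ Set.Ioo 0 1 := by
  refine ⟨(irrational_gaussIter hω n).ne_zero.symm.lt_of_le ?_, ?_⟩ <;> cases n
  exacts [Int.fract_nonneg _, Int.fract_nonneg _, Int.fract_lt_one _, Int.fract_lt_one _]

lemma one_le_cfA_succ {ω : ℝ} (hω : Irrational ω) (n : ℕ) : 1 ≤ cfA ω (n + 1) := by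
  obtain ⟨h0, h1⟩ := gaussIter_mem_Ioo hω n
  exact Int.le_floor.2 (by exact_mod_cast (one_le_inv₀ h0).2 h1.le)

lemma one_le_qden {ω : ℝ} (hω : Irrational ω) : ∀ n, 1 ≤ qden ω n
  | 0 => le_rfl
  | 1 => by have : 1 ≤ cfA ω 1 := one_le_cfA_succ hω 0; simp only [qden]; omega
  | n + 2 => (one_le_qden hω n).trans (by simp only [qden]; omega)

lemma qden_le_qden_succ {ω : ℝ} (hω : Irrational ω) : ∀ n, qden ω n ≤ qden ω (n + 1)
  | 0 => one_le_qden hω 1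
  | n + 1 => by
    have ha : 1 ≤ cfA ω (n + 2) := one_le_cfA_succ hω (n + 1)
    have : qden ω (n + 1) ≤ (cfA ω (n + 2)).toNat * qden ω (n + 1) :=
      Nat.le_mul_of_pos_left _ (by omega)
    simp only [qden]; omega

lemma two_mul_qden_le_qden_add_two {ω : ℝ} (hω : Irrational ω) (n : ℕ) :
    2 * qden ω n ≤ qden ω (n + 2) := by
  have ha : 1 ≤ cfA ω (n + 2) := one_le_cfA_succ hω (n + 1)
  have : qden ω (n + 1) ≤ (cfA ω (n + 2)).toNat * qden ω (n + 1) :=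
    Nat.le_mul_of_pos_left _ (by omega)
  have := qden_le_qden_succ hω n
  simp only [qden]; omega

lemma one_le_qr {ω : ℝ} (hω : Irrational ω) (n : ℕ) : 1 ≤ qr ω n := by
  unfold qr; exact_mod_cast one_le_qden hω n

lemma two_mul_qr_le_qr_add_two {ω : ℝ} (hω : Irrational ω) (n : ℕ) :
    2 * qr ω n ≤ qr ω (n + 2) := by
  unfold qr; exact_mod_cast two_mul_qden_le_qden_add_two hω n

section DoublingSequence

variable {u : ℕ → ℝ}

lemma two_pow_le_of_two_mul_le (h1 : ∀ n, 1 ≤ u n) (h2 : ∀ n, 2 * u n ≤ u (n + 2)) (i : ℕ) :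
    ∀ k, (2 : ℝ) ^ k ≤ u (2 * k + i)
  | 0 => by simpa using h1 i
  | k + 1 => calc
      (2 : ℝ) ^ (k + 1) = 2 * 2 ^ k := pow_succ' 2 k
      _ ≤ 2 * u (2 * k + i) := by gcongr; exact two_pow_le_of_two_mul_le h1 h2 i k
      _ ≤ u (2 * (k + 1) + i) := by convert h2 (2 * k + i) using 2; ring

lemma summable_inv_sqrt_of_two_mul_le (h1 : ∀ n, 1 ≤ u n) (h2 : ∀ n, 2 * u n ≤ u (n + 2)) :
    Summable fun n ↦ (√(u n))⁻¹ := by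
  have hgeom : Summable fun k : ℕ ↦ (√2)⁻¹ ^ k :=
    summable_geometric_of_lt_one (by positivity) (inv_lt_one_of_one_lt₀ Real.one_lt_sqrt_two)
  have hpar (i : ℕ) : Summable fun k ↦ (√(u (2 * k + i)))⁻¹ := by
    refine hgeom.of_nonneg_of_le (fun k ↦ by positivity) fun k ↦ ?_
    rw [inv_pow]
    refine inv_anti₀ (by positivity)
      ((Real.le_sqrt (by positivity) (by linarith [h1 (2 * k + i)])).2 ?_)
    rw [← pow_mul, mul_comm, pow_mul, Real.sq_sqrt zero_le_two]
    exact two_pow_le_of_two_mul_le h1 h2 i k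
  exact Summable.even_add_odd (by simpa using hpar 0) (hpar 1)

end DoublingSequence

lemma Real.log_add_one_div_le {x : ℝ} (hx : 1 ≤ x) : log (x + 1) / x ≤ 2 * √2 * (√x)⁻¹ := by
  have hsqrt : log (x + 1) ≤ 2 * √(x + 1) := by
    have := Real.log_le_sub_one_of_pos (Real.sqrt_pos.2 (by linarith : 0 < x + 1))
    rw [Real.log_sqrt (by linarith)] at this
    linarith
  have hx2 : √(x + 1) ≤ √2 * √x := by
    rw [← Real.sqrt_mul zero_le_two]; exact Real.sqrt_le_sqrt (by linarith)
  rw [div_le_iff₀ (by linarith)]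
  calc log (x + 1) ≤ 2 * (√2 * √x) := hsqrt.trans (by linarith)
    _ = 2 * √2 * (√x)⁻¹ * x := by field_simp; rw [Real.sq_sqrt (by linarith)]

lemma summable_log_add_one_div_of_two_mul_le {u : ℕ → ℝ} (h1 : ∀ n, 1 ≤ u n)
    (h2 : ∀ n, 2 * u n ≤ u (n + 2)) : Summable fun n ↦ log (u n + 1) / u n :=
  ((summable_inv_sqrt_of_two_mul_le h1 h2).mul_left (2 * √2)).of_nonneg_of_le
    (fun n ↦ div_nonneg (log_nonneg (by linarith [h1 n])) (by linarith [h1 n]))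
    (fun n ↦ Real.log_add_one_div_le (h1 n))

lemma log_qr_succ_div_le_of_lt {ω : ℝ} (hω : Irrational ω) {j : ℕ}
    (h : qden ω (j + 1) < (qden ω j + 1) ^ 2) :
    log (qr ω (j + 1)) / qr ω j ≤ 2 * (log (qr ω j + 1) / qr ω j) := by
  have hq : qr ω (j + 1) ≤ (qr ω j + 1) ^ 2 := by unfold qr; exact_mod_cast h.le
  calc log (qr ω (j + 1)) / qr ω j ≤ log ((qr ω j + 1) ^ 2) / qr ω j := by
        have := one_le_qr hω j
        gcongr
        linarith [one_le_qr hω (j + 1)]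
    _ = 2 * (log (qr ω j + 1) / qr ω j) := by rw [log_pow]; push_cast; ring

lemma sum_filter_not_le_two_mul_tsum {ω : ℝ} (hω : Irrational ω) (N : ℕ) :
    ∑ j ∈ (range N).filter (fun j ↦ ¬ (qden ω j + 1) ^ 2 ≤ qden ω (j + 1)),
        log (qr ω (j + 1)) / qr ω j ≤ 2 * ∑' j, log (qr ω j + 1) / qr ω j := by
  have hsum := summable_log_add_one_div_of_two_mul_le (one_le_qr hω) (two_mul_qr_le_qr_add_two hω)
  calc _ ≤ ∑ j ∈ (range N).filter (fun j ↦ ¬ (qden ω j + 1) ^ 2 ≤ qden ω (j + 1)),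
          2 * (log (qr ω j + 1) / qr ω j) :=
        sum_le_sum fun j hj ↦ log_qr_succ_div_le_of_lt hω (not_le.1 (mem_filter.1 hj).2)
    _ ≤ ∑' j, 2 * (log (qr ω j + 1) / qr ω j) :=
        (hsum.mul_left 2).sum_le_tsum _ fun j _ ↦ mul_nonneg zero_le_two
          (div_nonneg (log_nonneg (by linarith [one_le_qr hω j])) (by linarith [one_le_qr hω j]))
    _ = 2 * ∑' j, log (qr ω j + 1) / qr ω j := tsum_mul_left

lemma frequently_le_sum_filter_sub {p : ℕ → Prop} [DecidablePred p] {f g : ℕ → ℝ}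
    {m : ℕ → ℕ} {B : ℝ} (hB : ∀ N, ∑ j ∈ (range N).filter (fun j ↦ ¬ p j), f j ≤ B)
    (h : ∀ A, ∃ᶠ n in atTop, A ≤ ∑ j ∈ range (m n), f j - g n) (A : ℝ) :
    ∃ᶠ n in atTop, A ≤ ∑ j ∈ (range (m n)).filter p, f j - g n :=
  (h (A + B)).mono fun n hn ↦ by
    linarith [sum_filter_add_sum_filter_not (range (m n)) p f, hB (m n)]

lemma setOf_infinite_of_frequently_le_sum_filter_sub {p : ℕ → Prop} [DecidablePred p]
    {f g : ℕ → ℝ} {m : ℕ → ℕ} {c : ℝ} (hf : ∀ j, 0 ≤ f j) (hg : ∀ᶠ n in atTop, c ≤ g n)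
    (h : ∀ A, ∃ᶠ n in atTop, A ≤ ∑ j ∈ (range (m n)).filter p, f j - g n) :
    {j | p j}.Infinite := by
  intro hfin
  obtain ⟨n, hn, hgn⟩ := ((h (∑ j ∈ hfin.toFinset, f j - c + 1)).and_eventually hg).exists
  have : ∑ j ∈ (range (m n)).filter p, f j ≤ ∑ j ∈ hfin.toFinset, f j :=
    sum_le_sum_of_subset_of_nonneg (fun j hj ↦ hfin.mem_toFinset.2 (mem_filter.1 hj).2)
      fun j _ _ ↦ hf j
  linarith

theorem stmt16_general (ω : ℝ) (hω : Irrational ω)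
    (M : ℕ → ℝ)
    (c : ℝ) (hc : ∀ n : ℕ, 1 ≤ n → c ≤ Real.log (M n) / n)
    (k : ℕ → ℕ)
    (hlim : ∀ A : ℝ, ∃ᶠ n in atTop,
      A ≤ (∑ j ∈ Finset.range (k n + 1), Real.log (qr ω (j + 1)) / qr ω j)
            - Real.log (M n) / n) :
    (∀ A : ℝ, ∃ᶠ n in atTop,
      A ≤ (∑ j ∈ (Finset.range (k n + 1)).filter
              (fun j => (qden ω j + 1) ^ 2 ≤ qden ω (j + 1)),
            Real.log (qr ω (j + 1)) / qr ω j)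
            - Real.log (M n) / n) ∧
    {l : ℕ | (qden ω l + 1) ^ 2 ≤ qden ω (l + 1)}.Infinite := by
  have hU := frequently_le_sum_filter_sub (sum_filter_not_le_two_mul_tsum hω) hlim
  refine ⟨hU, setOf_infinite_of_frequently_le_sum_filter_sub (c := c) (fun j ↦ ?_) ?_ hU⟩
  · exact div_nonneg (log_nonneg (one_le_qr hω (j + 1))) (by linarith [one_le_qr hω j])
  · filter_upwards [eventually_ge_atTop 1] using hc

/-- if `limsup (∑_{j=0}^{k(n)} log q_{j+1}/q_j - (log M_n)/n) = +∞` and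
`inf_n (log M_n)/n = c > -∞`, then already the sum restricted to the indices `j` with
`q_j ∈ U = {q_j : q_{j+1} ≥ (q_j+1)²}` has `limsup = +∞`; in particular `U` is
infinite (hence nonempty).  (`limsup = +∞` is expressed as: every real bound is
exceeded frequently.) -/
theorem stmt16 (ω : ℝ) (hω : Irrational ω)
    (M : ℕ → ℝ) (hMpos : ∀ n : ℕ, 1 ≤ n → 0 < M n)
    (c : ℝ) (hc : ∀ n : ℕ, 1 ≤ n → c ≤ Real.log (M n) / n)
    (k : ℕ → ℕ) (hk : ∀ n : ℕ, 1 ≤ n → qden ω (k n) ≤ n ∧ n < qden ω (k n + 1))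
    (hlim : ∀ A : ℝ, ∃ᶠ n in atTop,
      A ≤ (∑ j ∈ Finset.range (k n + 1), Real.log (qr ω (j + 1)) / qr ω j)
            - Real.log (M n) / n) :
    (∀ A : ℝ, ∃ᶠ n in atTop,
      A ≤ (∑ j ∈ (Finset.range (k n + 1)).filter
              (fun j => (qden ω j + 1) ^ 2 ≤ qden ω (j + 1)),
            Real.log (qr ω (j + 1)) / qr ω j)
            - Real.log (M n) / n) ∧
    {l : ℕ | (qden ω l + 1) ^ 2 ≤ qden ω (l + 1)}.Infinite :=
  stmt16_general ω hω M c hc k hlim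
end
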